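/- arXiv:1210.5767 — 2 statements merged into one kernel-verified Lean document; each statement's English description precedes it below -/
import Mathlib

section
/- The operators E and F on V = ℂ^{n+1} satisfy the (r,s)-Serre relation E³F − (rs)^{−1}[3] E²FE + (rs)^{−1}[3] EFE² − FE³ = 0, where [3] = r² + rs + s². (This is the relation (ad_l e₁)³(e₀) = 0 evaluated on the evaluation representation of U_{r,s}(ŝl₂).) -/
/-- The two-parameter quantum integer `[m] = (r^m - s^m)/(r - s)`. -/
noncomputable def qint (r s : ℂ) (m : ℕ) : ℂ := (r ^ m - s ^ m) / (r - s)

/-- The operator `E` on `V = ℂ^{n+1}`, `E v_i = [n+1-i] v_{i-1}` (with `v_{-1} = 0`). -/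
noncomputable def Emat (n : ℕ) (r s : ℂ) : Matrix (Fin (n + 1)) (Fin (n + 1)) ℂ :=
  Matrix.of fun j i => if (j : ℕ) + 1 = (i : ℕ) then qint r s (n + 1 - (i : ℕ)) else 0

/-- The operator `F` on `V = ℂ^{n+1}`, `F v_i = [i+1] v_{i+1}` (with `v_{n+1} = 0`). -/
noncomputable def Fmat (n : ℕ) (r s : ℂ) : Matrix (Fin (n + 1)) (Fin (n + 1)) ℂ :=
  Matrix.of fun j i => if (j : ℕ) = (i : ℕ) + 1 then qint r s ((i : ℕ) + 1) else 0

/-!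
`E²` is supported on the second superdiagonal, while `EF` and `FE` are diagonal, with
`EF v_k = [n-k][k+1] v_k` and `FE v_k = [k][n+1-k] v_k`. Writing the four monomials as
`E²·EF`, `E²·FE`, `EF·E²`, `FE·E²`, the `(j, j+2)` entry of the Serre combination is
`(E²)_{j,j+2}` times a combination of these diagonal weights at `j` and `j+2`, which vanishes
by a polynomial identity between quantum integers.
-/

lemma qint_zero (r s : ℂ) : qint r s 0 = 0 := by simp [qint]

lemma qint_serre_identity (r s : ℂ) (m j : ℕ) :
    r * s * (qint r s m * qint r s (j + 3) - qint r s j * qint r s (m + 3)) =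
      (r ^ 2 + r * s + s ^ 2) *
        (qint r s (m + 1) * qint r s (j + 2) - qint r s (m + 2) * qint r s (j + 1)) := by
  simp only [qint, div_eq_mul_inv]
  ring

namespace Emat

variable (n : ℕ) (r s : ℂ)

lemma mul_apply (M : Matrix (Fin (n + 1)) (Fin (n + 1)) ℂ) (j i : Fin (n + 1)) :
    (Emat n r s * M) j i =
      if h : (j : ℕ) < n then qint r s (n - j) * M ⟨j + 1, by omega⟩ i else 0 := by
  rw [Matrix.mul_apply]
  split_ifs with h
  · rw [Finset.sum_eq_single ⟨j + 1, by omega⟩]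
    · simp [Emat, show n + 1 - (j + 1) = n - j by omega]
    · intro k _ hk
      simp [Emat, show (j : ℕ) + 1 ≠ k from fun hc => hk (Fin.ext hc.symm)]
    · simp
  · refine Finset.sum_eq_zero fun k _ => ?_
    simp [Emat, show (j : ℕ) + 1 ≠ k by omega]

lemma sq_apply_of_ne {j i : Fin (n + 1)} (h : (j : ℕ) + 2 ≠ i) : (Emat n r s ^ 2) j i = 0 := by
  rw [sq, mul_apply]
  split_ifs
  · simp [Emat, show (j : ℕ) + 1 + 1 ≠ i by omega]
  · rfl

lemma mul_Fmat :
    Emat n r s * Fmat n r s =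
      Matrix.diagonal fun k : Fin (n + 1) => qint r s (n - k) * qint r s (k + 1) := by
  ext j i
  rw [mul_apply, Matrix.diagonal_apply]
  split_ifs with h hji hji
  · simp [Fmat, hji]
  · simp [Fmat, Fin.val_ne_of_ne hji]
  · simp [hji, show n - (i : ℕ) = 0 by omega, qint_zero]
  · rfl

end Emat

lemma Fmat.mul_Emat (n : ℕ) (r s : ℂ) :
    Fmat n r s * Emat n r s =
      Matrix.diagonal fun k : Fin (n + 1) => qint r s k * qint r s (n + 1 - k) := by
  ext j i
  rw [Matrix.mul_apply, Matrix.diagonal_apply]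
  by_cases hj : (j : ℕ) = 0
  · refine (Finset.sum_eq_zero fun k _ => ?_).trans ?_
    · simp [Fmat, hj]
    · simp [hj, qint_zero]
  rw [Finset.sum_eq_single ⟨j - 1, by omega⟩]
  · by_cases hji : j = i
    · subst hji
      simp [Fmat, Emat, show (j : ℕ) - 1 + 1 = j by omega]
    · have hne : (j : ℕ) - 1 + 1 ≠ i := fun hc => hji (Fin.ext (by omega))
      simp [Emat, hji, hne]
  · intro k _ hk
    simp [Fmat, show (j : ℕ) ≠ k + 1 from fun hc => hk (Fin.ext (by simp; omega))]
  · simp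

theorem serre_relation_E_general (n : ℕ) (r s : ℂ) (hr : r ≠ 0) (hs : s ≠ 0) :
    Emat n r s ^ 3 * Fmat n r s
      - ((r * s)⁻¹ * (r ^ 2 + r * s + s ^ 2)) • (Emat n r s ^ 2 * Fmat n r s * Emat n r s)
      + ((r * s)⁻¹ * (r ^ 2 + r * s + s ^ 2)) • (Emat n r s * Fmat n r s * Emat n r s ^ 2)
      - Fmat n r s * Emat n r s ^ 3 = 0 := by
  set E := Emat n r s
  set F := Fmat n r s
  set c := (r * s)⁻¹ * (r ^ 2 + r * s + s ^ 2)
  have regroup : E ^ 3 * F - c • (E ^ 2 * F * E) + c • (E * F * E ^ 2) - F * E ^ 3 =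
      E ^ 2 * (E * F) - c • (E ^ 2 * (F * E)) + c • ((E * F) * E ^ 2) - (F * E) * E ^ 2 := by
    noncomm_ring
  rw [regroup, Emat.mul_Fmat, Fmat.mul_Emat]
  ext j i
  simp only [Matrix.sub_apply, Matrix.add_apply, Matrix.smul_apply, Matrix.zero_apply,
    smul_eq_mul, Matrix.mul_diagonal, Matrix.diagonal_mul]
  by_cases h : (j : ℕ) + 2 = i
  · obtain ⟨m, hm⟩ : ∃ m, n - i = m := ⟨_, rfl⟩
    rw [hm, show n + 1 - i = m + 1 by omega, show n - j = m + 2 by omega,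
      show n + 1 - j = m + 3 by omega, ← h]
    linear_combination (E ^ 2) j i * (r * s)⁻¹ * qint_serre_identity r s m j
      - (E ^ 2) j i * (qint r s m * qint r s (j + 3) - qint r s j * qint r s (m + 3)) *
        (inv_mul_cancel₀ (mul_ne_zero hr hs))
  · have hE2 : (E ^ 2) j i = 0 := Emat.sq_apply_of_ne n r s h
    simp [hE2]

/-- The `(r,s)`-Serre relation
`E³F − (rs)⁻¹[3] E²FE + (rs)⁻¹[3] EFE² − FE³ = 0`, where `[3] = r² + rs + s²`. -/
theorem serre_relation_E (n : ℕ) (r s : ℂ) (hr : r ≠ 0) (hs : s ≠ 0) (hrs : r ≠ s) :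
    Emat n r s ^ 3 * Fmat n r s
      - ((r * s)⁻¹ * (r ^ 2 + r * s + s ^ 2)) • (Emat n r s ^ 2 * Fmat n r s * Emat n r s)
      + ((r * s)⁻¹ * (r ^ 2 + r * s + s ^ 2)) • (Emat n r s * Fmat n r s * Emat n r s ^ 2)
      - Fmat n r s * Emat n r s ^ 3 = 0 :=
  serre_relation_E_general n r s hr hs
end

section
/- For every natural number n and every 0 ≤ i ≤ n, the following identity holds in the ring of formal power series ℂ[[u]]: (1 − a r^{−i} s^{i−n} u)(1 − a r^{1−i} s^{i−n−1} u) · ( r^{n−i} s^{i} + Σ_{k≥1} (r − s) ( (a r^{−i} s^{i−n})^k [i+1][n−i] − (a r^{1−i} s^{i−n−1})^k [i][n+1−i] ) u^k ) = r^{n−i} s^{i} (1 − a r s^{−n−1} u)(1 − a r^{−n} u). -/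
/-!
With `α = a r^{-i} s^{i-n}` and `β = a r^{1-i} s^{i-n-1}`, the series is
`e + A Σ_k α^k u^k - B Σ_k β^k u^k` with `e = r^i s^{n-i}`, `A = (r-s)[i+1][n-i]` and
`B = (r-s)[i][n+1-i]`; its constant term is right because
`(r-s)([i+1][n-i] - [i][n+1-i]) = r^{n-i} s^i - r^i s^{n-i}`.
Multiplying by `(1 - αu)(1 - βu)` clears both geometric series, so both sides are quadratic
polynomials in `u`, and their coefficients agree by rational identities in `r`, `s`, `a`.
-/

open PowerSeries

namespace PowerSeries

variable {R : Type*} [CommRing R]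

theorem one_sub_C_mul_X_mul_mk_pow (α : R) : (1 - C α * X) * mk (α ^ ·) = 1 := by
  have h := congrArg (rescale α) (mk_one_mul_one_sub_eq_one R)
  rw [map_mul, map_sub, map_one, rescale_X, rescale_mk, mul_comm] at h
  simpa only [Pi.one_apply, mul_one] using h

theorem one_sub_mul_one_sub_mul_mk_eq {α β γ δ A B e c : R} {f : ℕ → R}
    (hf0 : f 0 = c) (hf : ∀ k, f (k + 1) = A * α ^ (k + 1) - B * β ^ (k + 1))
    (h0 : e + A - B = c) (h1 : e * (α + β) + A * β - B * α = c * (γ + δ))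
    (h2 : e * (α * β) = c * (γ * δ)) :
    (1 - C α * X) * (1 - C β * X) * mk f = C c * ((1 - C γ * X) * (1 - C δ * X)) := by
  have hmk : mk f = C e + C A * mk (α ^ ·) - C B * mk (β ^ ·) := by
    ext (_ | k) <;> simp [hf0, hf, ← h0]
  have h0' := congrArg C h0
  have h1' := congrArg C h1
  have h2' := congrArg C h2
  simp only [map_add, map_sub, map_mul] at h0' h1' h2'
  rw [hmk]
  linear_combination (C A * (1 - C β * X)) * one_sub_C_mul_X_mul_mk_pow α
    - (C B * (1 - C α * X)) * one_sub_C_mul_X_mul_mk_pow β + h0' - X * h1' + X ^ 2 * h2'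

end PowerSeries

theorem eigenvalue_generating_function_general (r s a : ℂ) (hr : r ≠ 0) (hs : s ≠ 0)
    (hrs : r ≠ s) (n i : ℕ) (hi : i ≤ n) :
    (1 - PowerSeries.C (a * r ^ (-(i : ℤ)) * s ^ ((i : ℤ) - (n : ℤ))) * PowerSeries.X)
      * (1 - PowerSeries.C (a * r ^ ((1 : ℤ) - (i : ℤ)) * s ^ ((i : ℤ) - (n : ℤ) - 1))
          * PowerSeries.X)
      * PowerSeries.mk (fun k =>
          if k = 0 then r ^ ((n : ℤ) - (i : ℤ)) * s ^ (i : ℕ)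
          else (r - s) *
            ((a * r ^ (-(i : ℤ)) * s ^ ((i : ℤ) - (n : ℤ))) ^ k
                * qint r s (i + 1) * qint r s (n - i)
              - (a * r ^ ((1 : ℤ) - (i : ℤ)) * s ^ ((i : ℤ) - (n : ℤ) - 1)) ^ k
                * qint r s i * qint r s (n + 1 - i)))
    = PowerSeries.C (r ^ ((n : ℤ) - (i : ℤ)) * s ^ (i : ℕ))
      * ((1 - PowerSeries.C (a * r * s ^ (-(n : ℤ) - 1)) * PowerSeries.X)
          * (1 - PowerSeries.C (a * r ^ (-(n : ℤ))) * PowerSeries.X)) := by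
  obtain ⟨j, rfl⟩ := Nat.exists_eq_add_of_le hi
  have hα : (i : ℤ) - ((i + j : ℕ) : ℤ) = -(j : ℤ) := by push_cast; ring
  have hβ : -(j : ℤ) - 1 = -((j + 1 : ℕ) : ℤ) := by push_cast; ring
  have hγ : -((i + j : ℕ) : ℤ) - 1 = -((i + j + 1 : ℕ) : ℤ) := by push_cast; ring
  have hc : ((i + j : ℕ) : ℤ) - i = (j : ℤ) := by push_cast; ring
  rw [show i + j - i = j by omega, show i + j + 1 - i = j + 1 by omega, hα, hβ, hγ, hc,
    zpow_sub₀ hr]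
  simp only [zpow_neg, zpow_natCast, zpow_one]
  have hrs' : r - s ≠ 0 := sub_ne_zero.mpr hrs
  apply one_sub_mul_one_sub_mul_mk_eq (e := r ^ i * s ^ j)
    (A := (r - s) * qint r s (i + 1) * qint r s j) (B := (r - s) * qint r s i * qint r s (j + 1))
  · simp
  · intro k
    rw [if_neg k.succ_ne_zero]
    ring
  · unfold qint
    field_simp
    ring
  · unfold qint
    field_simp
    ring
  · field_simp
    ring

/-- For every `n` and `0 ≤ i ≤ n`, in `ℂ[[u]]`:
`(1 − a r^{−i} s^{i−n} u)(1 − a r^{1−i} s^{i−n−1} u) ·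
  (r^{n−i} s^i + Σ_{k≥1} (r−s)((a r^{−i} s^{i−n})^k [i+1][n−i]
      − (a r^{1−i} s^{i−n−1})^k [i][n+1−i]) u^k)
 = r^{n−i} s^i (1 − a r s^{−n−1} u)(1 − a r^{−n} u)`. -/
theorem eigenvalue_generating_function (r s a : ℂ) (hr : r ≠ 0) (hs : s ≠ 0) (ha : a ≠ 0)
    (hrs : r ≠ s) (n i : ℕ) (hi : i ≤ n) :
    (1 - PowerSeries.C (a * r ^ (-(i : ℤ)) * s ^ ((i : ℤ) - (n : ℤ))) * PowerSeries.X)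
      * (1 - PowerSeries.C (a * r ^ ((1 : ℤ) - (i : ℤ)) * s ^ ((i : ℤ) - (n : ℤ) - 1))
          * PowerSeries.X)
      * PowerSeries.mk (fun k =>
          if k = 0 then r ^ ((n : ℤ) - (i : ℤ)) * s ^ (i : ℕ)
          else (r - s) *
            ((a * r ^ (-(i : ℤ)) * s ^ ((i : ℤ) - (n : ℤ))) ^ k
                * qint r s (i + 1) * qint r s (n - i)
              - (a * r ^ ((1 : ℤ) - (i : ℤ)) * s ^ ((i : ℤ) - (n : ℤ) - 1)) ^ k
                * qint r s i * qint r s (n + 1 - i)))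
    = PowerSeries.C (r ^ ((n : ℤ) - (i : ℤ)) * s ^ (i : ℕ))
      * ((1 - PowerSeries.C (a * r * s ^ (-(n : ℤ) - 1)) * PowerSeries.X)
          * (1 - PowerSeries.C (a * r ^ (-(n : ℤ))) * PowerSeries.X)) :=
  eigenvalue_generating_function_general r s a hr hs hrs n i hi
end
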